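/- arXiv:2306.06056 — 2 statements merged into one kernel-verified Lean document; each statement's English description precedes it below -/
import Mathlib

section
/- Let S ⊆ {0,1}^m be decreasing, and let T be the increasing set generated by the coordinatewise complements of the generators of S. Then the orthogonal complement of GRM(↓S) (with respect to the standard bilinear form on F₂^{2^m}) equals GRM(↑T^c), i.e. GRM(↓S)^⊥ = GRM({0,1}^m \ ↑T). -/
open Matrix

noncomputable section
open scoped Classical

def Rcube (m : ℕ) : Matrix (Fin m → Fin 2) (Fin m → Fin 2) (ZMod 2) :=
  Matrix.of fun r c => ∏ i, (!![1, 1; 0, 1] : Matrix (Fin 2) (Fin 2) (ZMod 2)) (r i) (c i)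

def Dmat {m : ℕ} (U : Set (Fin m → Fin 2)) : Matrix U (Fin m → Fin 2) (ZMod 2) :=
  Matrix.of fun u v => if v = (u : Fin m → Fin 2) then 1 else 0

def GRM {m : ℕ} (U : Set (Fin m → Fin 2)) :
    Submodule (ZMod 2) ((Fin m → Fin 2) → ZMod 2) :=
  Submodule.span (ZMod 2) (Set.range (Dmat U * Rcube m))

lemma row_prod {m : ℕ} (U : Set (Fin m → Fin 2)) (u : U) :
    (Dmat U * Rcube m) u = Rcube m u := by
  funext c
  simp [Matrix.mul_apply, Dmat, ite_mul]

lemma mem_GRM {m : ℕ} {U : Set (Fin m → Fin 2)} {a : Fin m → Fin 2} (ha : a ∈ U) :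
    Rcube m a ∈ GRM U :=
  Submodule.subset_span ⟨⟨a, ha⟩, row_prod U ⟨a, ha⟩⟩

lemma dot_rows {m : ℕ} (a b : Fin m → Fin 2) :
    ∑ x : Fin m → Fin 2, Rcube m a x * Rcube m b x
      = if (fun i => 1 - a i) ≤ b then 1 else 0 := by
  have : ∀ x : Fin m → Fin 2, Rcube m a x * Rcube m b x
      = ∏ i, ((!![1, 1; 0, 1] : Matrix (Fin 2) (Fin 2) (ZMod 2)) (a i) (x i) *
          (!![1, 1; 0, 1] : Matrix (Fin 2) (Fin 2) (ZMod 2)) (b i) (x i)) := by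
    intro x; rw [Rcube]; simp [Finset.prod_mul_distrib]
  simp only [this]
  rw [← Fintype.prod_sum (fun (i : Fin m) (t : Fin 2) =>
    (!![1, 1; 0, 1] : Matrix (Fin 2) (Fin 2) (ZMod 2)) (a i) t *
      (!![1, 1; 0, 1] : Matrix (Fin 2) (Fin 2) (ZMod 2)) (b i) t)]
  have h1 : ∀ i : Fin m, (∑ t : Fin 2,
      (!![1, 1; 0, 1] : Matrix (Fin 2) (Fin 2) (ZMod 2)) (a i) t *
        (!![1, 1; 0, 1] : Matrix (Fin 2) (Fin 2) (ZMod 2)) (b i) t)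
      = if 1 - a i ≤ b i then 1 else 0 := by
    intro i
    have : ∀ p q : Fin 2, (∑ t : Fin 2,
        (!![1, 1; 0, 1] : Matrix (Fin 2) (Fin 2) (ZMod 2)) p t *
          (!![1, 1; 0, 1] : Matrix (Fin 2) (Fin 2) (ZMod 2)) q t)
        = if 1 - p ≤ q then 1 else 0 := by decide
    exact this (a i) (b i)
  simp only [h1, Fintype.prod_boole]
  simp [Pi.le_def]

lemma Rcube_mul_self {m : ℕ} (a c : Fin m → Fin 2) :
    ∑ x : Fin m → Fin 2, Rcube m a x * Rcube m x c = if a = c then 1 else 0 := by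
  have : ∀ x : Fin m → Fin 2, Rcube m a x * Rcube m x c
      = ∏ i, ((!![1, 1; 0, 1] : Matrix (Fin 2) (Fin 2) (ZMod 2)) (a i) (x i) *
          (!![1, 1; 0, 1] : Matrix (Fin 2) (Fin 2) (ZMod 2)) (x i) (c i)) := by
    intro x; rw [Rcube]; simp [Finset.prod_mul_distrib]
  simp only [this]
  rw [← Fintype.prod_sum (fun (i : Fin m) (t : Fin 2) =>
    (!![1, 1; 0, 1] : Matrix (Fin 2) (Fin 2) (ZMod 2)) (a i) t *
      (!![1, 1; 0, 1] : Matrix (Fin 2) (Fin 2) (ZMod 2)) t (c i))]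
  have h1 : ∀ i : Fin m, (∑ t : Fin 2,
      (!![1, 1; 0, 1] : Matrix (Fin 2) (Fin 2) (ZMod 2)) (a i) t *
        (!![1, 1; 0, 1] : Matrix (Fin 2) (Fin 2) (ZMod 2)) t (c i))
      = if a i = c i then 1 else 0 := by
    intro i
    have : ∀ p q : Fin 2, (∑ t : Fin 2,
        (!![1, 1; 0, 1] : Matrix (Fin 2) (Fin 2) (ZMod 2)) p t *
          (!![1, 1; 0, 1] : Matrix (Fin 2) (Fin 2) (ZMod 2)) t q)
        = if p = q then 1 else 0 := by decide
    exact this (a i) (c i)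
  simp only [h1, Fintype.prod_boole]
  congr 1
  simp [funext_iff]

/-- For decreasing `↓S` generated by `S₀,…,S_{u−1}` and `↑T` the increasing set generated
by the complements `T_j = 1⃗ − S_j`, the orthogonal complement of `GRM(↓S)` with respect to
the standard bilinear form is `GRM({0,1}^m \ ↑T)`. -/
theorem GRM_orthogonal_complement {m u : ℕ}
    (S T : Fin u → (Fin m → Fin 2)) (hT : ∀ j i, T j i = 1 - S j i) :
    {w : (Fin m → Fin 2) → ZMod 2 |
        ∀ v ∈ GRM {x | ∃ j, x ≤ S j}, ∑ x : Fin m → Fin 2, v x * w x = 0} =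
      ↑(GRM ({x | ∃ j, T j ≤ x}ᶜ)) := by
  ext w
  constructor
  · -- hard direction
    intro hw
    set c : (Fin m → Fin 2) → ZMod 2 := fun b => ∑ x, w x * Rcube m x b with hc
    have hdecomp : ∀ x, w x = ∑ b : Fin m → Fin 2, c b * Rcube m b x := by
      intro x
      calc w x = ∑ y : Fin m → Fin 2, w y * (if y = x then 1 else 0) := by
            simp
        _ = ∑ y : Fin m → Fin 2, w y * ∑ b, Rcube m y b * Rcube m b x := by
            simp only [Rcube_mul_self]
        _ = ∑ b : Fin m → Fin 2, c b * Rcube m b x := by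
            simp only [hc, Finset.mul_sum, Finset.sum_mul]
            rw [Finset.sum_comm]
            congr 1; ext b; congr 1; ext y; ring
    have hczero : ∀ a : Fin m → Fin 2, (∃ j, T j ≤ a) → c a = 0 := by
      intro a
      induction a using (wellFounded_gt (α := Fin m → Fin 2)).induction with
      | _ a IH =>
        rintro ⟨j, hj⟩
        have habar : (fun i => 1 - a i) ≤ S j := by
          intro i
          have h2 : ∀ s t x : Fin 2, t = 1 - s → t ≤ x → 1 - x ≤ s := by decide
          exact h2 (S j i) (T j i) (a i) (hT j i) (hj i)
        have hv : Rcube m (fun i => 1 - a i) ∈ GRM {x | ∃ j, x ≤ S j} :=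
          mem_GRM ⟨j, habar⟩
        have h0 := hw _ hv
        have hcompl : (fun i => 1 - (fun i => 1 - a i) i) = a := by
          funext i
          have : ∀ x : Fin 2, 1 - (1 - x) = x := by decide
          exact this (a i)
        have hexp : (∑ x : Fin m → Fin 2, Rcube m (fun i => 1 - a i) x * w x)
            = ∑ b : Fin m → Fin 2, c b * (if a ≤ b then 1 else 0) := by
          calc ∑ x : Fin m → Fin 2, Rcube m (fun i => 1 - a i) x * w x
              = ∑ x : Fin m → Fin 2, Rcube m (fun i => 1 - a i) x *
                  ∑ b, c b * Rcube m b x := by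
                simp only [← hdecomp]
            _ = ∑ b : Fin m → Fin 2, c b *
                  ∑ x, Rcube m (fun i => 1 - a i) x * Rcube m b x := by
                simp only [Finset.mul_sum]
                rw [Finset.sum_comm]
                congr 1; ext b; congr 1; ext x; ring
            _ = ∑ b : Fin m → Fin 2, c b * (if a ≤ b then 1 else 0) := by
                simp only [dot_rows, hcompl]
        rw [hexp] at h0
        have : (∑ b : Fin m → Fin 2, c b * (if a ≤ b then 1 else 0)) = c a := by
          rw [Finset.sum_eq_single a]
          · simp
          · intro b _ hba
            by_cases hab : a ≤ b
            · have hlt : a < b := lt_of_le_of_ne hab (Ne.symm hba)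
              rw [IH b hlt ⟨j, le_trans hj hab⟩]
              ring
            · simp [hab]
          · simp
        rw [this] at h0
        exact h0
    have hwsum : w = ∑ b : Fin m → Fin 2, c b • Rcube m b := by
      funext x
      rw [hdecomp x]
      simp [Finset.sum_apply]
    rw [hwsum]
    apply Submodule.sum_mem
    intro b _
    by_cases hb : ∃ j, T j ≤ b
    · rw [hczero b hb]
      simp
    · exact Submodule.smul_mem _ _ (mem_GRM hb)
  · -- easy direction
    intro hw v hv
    show (∑ x : Fin m → Fin 2, v x * w x) = 0
    induction hv using Submodule.span_induction with
    | mem v hvmem =>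
      obtain ⟨a, rfl⟩ := hvmem
      rw [row_prod]
      induction hw using Submodule.span_induction with
      | mem w hwmem =>
        obtain ⟨b, rfl⟩ := hwmem
        rw [row_prod, dot_rows]
        have hb : ¬ (fun i => 1 - (a : Fin m → Fin 2) i) ≤ (b : Fin m → Fin 2) := by
          intro hle
          obtain ⟨j, hj⟩ := a.2
          apply b.2
          refine ⟨j, fun i => le_trans ?_ (hle i)⟩
          rw [hT j i]
          have h3 : ∀ s x : Fin 2, x ≤ s → 1 - s ≤ 1 - x := by decide
          exact h3 (S j i) ((a : Fin m → Fin 2) i) (hj i)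
        simp [hb]
      | zero => simp
      | add x y hx hy ihx ihy =>
        simp only [Pi.add_apply, mul_add, Finset.sum_add_distrib, ihx, ihy, add_zero]
      | smul r x hx ihx =>
        simp only [Pi.smul_apply, smul_eq_mul, mul_left_comm, ← Finset.mul_sum, ihx,
          mul_zero]
    | zero => simp
    | add x y hx hy ihx ihy =>
      simp only [Pi.add_apply, add_mul, Finset.sum_add_distrib, ihx, ihy, add_zero]
    | smul r x hx ihx =>
      simp only [Pi.smul_apply, smul_eq_mul, mul_assoc, ← Finset.mul_sum, ihx, mul_zero]
end
end

section
/- Let S, T ⊆ {0,1}^m be decreasing with S ⊆ T, and write S = ({0}×S₀) ∪ ({1}×S₁), T = ({0}×T₀) ∪ ({1}×T₁) for S₀,S₁,T₀,T₁ ⊆ {0,1}^{m−1}. Then d(T,S) = min(2·d(T₀,S₀), d(T₁,S₁)), where d(T,S) = min{wt(v) : v ∈ GRM(T) \ GRM(S)}. -/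
/-!
Splitting along the first coordinate, `GRM U` is the image of `GRM U₀ × GRM U₁` under the
Plotkin map `(u, v) ↦ (u, u + v)`, which satisfies `wt (u, u + v) = wt u + wt (u + v)`. The words
`(a, a)` and `(0, b)` give the upper bound. Conversely, let `(u, u + v) ∈ GRM T \ GRM S`. If
`v ∉ GRM S₁`, its weight is at least `wt v ≥ d(T₁, S₁)`. Otherwise `u ∉ GRM S₀`, and since
decreasing sets have `S₁ ⊆ S₀` and `T₁ ⊆ T₀`, both `u` and `u + v` lie in `GRM T₀ \ GRM S₀`, so
the weight is at least `2 d(T₀, S₀)`.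
-/

open Matrix

noncomputable section
open scoped Classical

/-- Hamming weight of a codeword. -/
def wtc {m : ℕ} (v : (Fin m → Fin 2) → ZMod 2) : ℕ :=
  (Finset.univ.filter fun x : Fin m → Fin 2 => v x ≠ 0).card

/-- `d(T,S) = min{wt v : v ∈ GRM(T) \ GRM(S)}` (in `ℕ∞`, with `sInf ∅ = ⊤`). -/
def dGRM {m : ℕ} (T S : Set (Fin m → Fin 2)) : ℕ∞ :=
  sInf {k : ℕ∞ | ∃ v, v ∈ GRM T ∧ v ∉ GRM S ∧ (wtc v : ℕ∞) = k}

local notation "Word " m:max => (Fin m → Fin 2) → ZMod 2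

section
variable {m : ℕ}

def slice (U : Set (Fin (m + 1) → Fin 2)) (i : Fin 2) : Set (Fin m → Fin 2) :=
  {s | Fin.cons i s ∈ U}

theorem IsLowerSet.slice_one_subset_slice_zero {U : Set (Fin (m + 1) → Fin 2)}
    (hU : IsLowerSet U) : slice U 1 ⊆ slice U 0 :=
  fun _ hs => hU (Fin.cons_le_cons.2 ⟨by decide, le_rfl⟩) hs

theorem word_ext_cons {c d : Word (m + 1)} (h : ∀ i x, c (Fin.cons i x) = d (Fin.cons i x)) :
    c = d :=
  funext (Fin.forall_fin_succ_pi.2 h)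

def uuv : (Word m × Word m) ≃ₗ[ZMod 2] Word (m + 1) where
  toFun p x := if x 0 = 0 then p.1 (Fin.tail x) else p.1 (Fin.tail x) + p.2 (Fin.tail x)
  invFun c := (fun x => c (Fin.cons 0 x), fun x => c (Fin.cons 0 x) + c (Fin.cons 1 x))
  map_add' p q := by funext x; by_cases h : x 0 = 0 <;> simp [h, add_add_add_comm]
  map_smul' r p := by funext x; by_cases h : x 0 = 0 <;> simp [h, mul_add]
  left_inv p := by ext x <;> simp [CharTwo.add_cancel_left]
  right_inv c := word_ext_cons fun i x => by fin_cases i <;> simp [CharTwo.add_cancel_left]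

@[simp] theorem uuv_apply_cons_zero (u v : Word m) (x : Fin m → Fin 2) :
    uuv (u, v) (Fin.cons 0 x) = u x := by
  simp [uuv]

@[simp] theorem uuv_apply_cons_one (u v : Word m) (x : Fin m → Fin 2) :
    uuv (u, v) (Fin.cons 1 x) = u x + v x := by
  simp [uuv]

theorem Rcube_cons (i j : Fin 2) (u x : Fin m → Fin 2) :
    Rcube (m + 1) (Fin.cons i u) (Fin.cons j x)
      = (!![1, 1; 0, 1] : Matrix (Fin 2) (Fin 2) (ZMod 2)) i j * Rcube m u x := by
  simp [Rcube, Fin.prod_univ_succ]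

theorem Rcube_cons_zero (u : Fin m → Fin 2) :
    Rcube (m + 1) (Fin.cons 0 u) = uuv (Rcube m u, 0) :=
  word_ext_cons fun j x => by fin_cases j <;> simp [Rcube_cons]

theorem Rcube_cons_one (u : Fin m → Fin 2) :
    Rcube (m + 1) (Fin.cons 1 u) = uuv (0, Rcube m u) :=
  word_ext_cons fun j x => by fin_cases j <;> simp [Rcube_cons]

theorem GRM_eq_span_image (U : Set (Fin m → Fin 2)) :
    GRM U = Submodule.span (ZMod 2) (Rcube m '' U) := by
  have rows : (Dmat U * Rcube m : Matrix U _ _) = fun u : U => Rcube m u := by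
    ext u x; simp [Dmat, Matrix.mul_apply]
  rw [GRM, rows]
  exact congrArg _ (Set.image_eq_range _ _).symm

theorem GRM_mono {U V : Set (Fin m → Fin 2)} (h : U ⊆ V) : GRM U ≤ GRM V := by
  simpa only [GRM_eq_span_image] using Submodule.span_mono (Set.image_mono h)

theorem GRM_eq_map_uuv (U : Set (Fin (m + 1) → Fin 2)) :
    GRM U = ((GRM (slice U 0)).prod (GRM (slice U 1))).map uuv.toLinearMap := by
  rw [GRM_eq_span_image, GRM_eq_span_image, GRM_eq_span_image, ← LinearMap.span_inl_union_inr,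
    Submodule.map_span]
  congr 1
  ext c
  constructor
  · rintro ⟨w, hw, rfl⟩
    obtain ⟨i, x, rfl⟩ : ∃ i x, w = Fin.cons i x := ⟨w 0, Fin.tail w, (Fin.cons_self_tail w).symm⟩
    fin_cases i
    · exact ⟨_, Or.inl ⟨_, ⟨x, hw, rfl⟩, rfl⟩, (Rcube_cons_zero x).symm⟩
    · exact ⟨_, Or.inr ⟨_, ⟨x, hw, rfl⟩, rfl⟩, (Rcube_cons_one x).symm⟩
  · rintro ⟨_, ⟨_, ⟨x, hx, rfl⟩, rfl⟩ | ⟨_, ⟨x, hx, rfl⟩, rfl⟩, rfl⟩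
    exacts [⟨_, hx, Rcube_cons_zero x⟩, ⟨_, hx, Rcube_cons_one x⟩]

theorem uuv_mem_GRM_iff {U : Set (Fin (m + 1) → Fin 2)} {u v : Word m} :
    uuv (u, v) ∈ GRM U ↔ u ∈ GRM (slice U 0) ∧ v ∈ GRM (slice U 1) := by
  rw [GRM_eq_map_uuv, Submodule.mem_map_equiv, LinearEquiv.symm_apply_apply, Submodule.mem_prod]

theorem wtc_eq_wtc_comp_cons_add (c : Word (m + 1)) :
    wtc c = wtc (fun x => c (Fin.cons 0 x)) + wtc (fun x => c (Fin.cons 1 x)) := by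
  simp only [wtc, Finset.card_filter]
  rw [← (Fin.consEquiv fun _ => Fin 2).sum_comp, Fintype.sum_prod_type, Fin.sum_univ_two]
  rfl

theorem wtc_uuv (u v : Word m) : wtc (uuv (u, v)) = wtc u + wtc (u + v) := by
  rw [wtc_eq_wtc_comp_cons_add]
  simp only [uuv_apply_cons_zero, uuv_apply_cons_one]
  rfl

theorem wtc_eq_hammingNorm (v : Word m) : wtc v = hammingNorm v := by
  simp [wtc, hammingNorm]

theorem wtc_le_wtc_add_wtc_add (u v : Word m) : wtc v ≤ wtc u + wtc (u + v) := by
  simp only [wtc_eq_hammingNorm]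
  calc hammingNorm v = hammingDist v 0 := (hammingDist_zero_right v).symm
    _ ≤ hammingDist v u + hammingDist u 0 := hammingDist_triangle _ _ _
    _ = hammingNorm (u + v) + hammingNorm u := by
      rw [hammingDist_eq_hammingNorm, hammingDist_zero_right, CharTwo.neg_eq, add_comm v]
    _ = hammingNorm u + hammingNorm (u + v) := add_comm _ _

theorem dGRM_le_wtc {T S : Set (Fin m → Fin 2)} {v : Word m} (hT : v ∈ GRM T) (hS : v ∉ GRM S) :
    dGRM T S ≤ wtc v :=
  sInf_le ⟨v, hT, hS, rfl⟩

theorem le_dGRM {T S : Set (Fin m → Fin 2)} {k : ℕ∞}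
    (h : ∀ v ∈ GRM T, v ∉ GRM S → k ≤ wtc v) : k ≤ dGRM T S :=
  le_sInf fun _ ⟨v, hT, hS, hv⟩ => hv ▸ h v hT hS

theorem dGRM_eq_top_or_exists_wtc_eq (T S : Set (Fin m → Fin 2)) :
    dGRM T S = ⊤ ∨ ∃ v ∈ GRM T, v ∉ GRM S ∧ (wtc v : ℕ∞) = dGRM T S := by
  rcases Set.eq_empty_or_nonempty {k : ℕ∞ | ∃ v, v ∈ GRM T ∧ v ∉ GRM S ∧ (wtc v : ℕ∞) = k}
    with h | h
  · left
    rw [dGRM, h, sInf_empty]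
  · right
    obtain ⟨v, hT, hS, hv⟩ := csInf_mem h
    exact ⟨v, hT, hS, hv⟩

variable (T S : Set (Fin (m + 1) → Fin 2))

theorem dGRM_le_two_mul_dGRM_slice_zero : dGRM T S ≤ 2 * dGRM (slice T 0) (slice S 0) := by
  obtain h | ⟨a, haT, haS, ha⟩ := dGRM_eq_top_or_exists_wtc_eq (slice T 0) (slice S 0)
  · simp [h]
  · calc dGRM T S ≤ wtc (uuv (a, 0)) :=
          dGRM_le_wtc (uuv_mem_GRM_iff.2 ⟨haT, zero_mem _⟩) fun h => haS (uuv_mem_GRM_iff.1 h).1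
      _ = 2 * dGRM (slice T 0) (slice S 0) := by
          rw [wtc_uuv, add_zero, ← ha, Nat.cast_add, two_mul]

theorem dGRM_le_dGRM_slice_one : dGRM T S ≤ dGRM (slice T 1) (slice S 1) :=
  le_dGRM fun b hbT hbS => by
    calc dGRM T S ≤ wtc (uuv (0, b)) :=
          dGRM_le_wtc (uuv_mem_GRM_iff.2 ⟨zero_mem _, hbT⟩) fun h => hbS (uuv_mem_GRM_iff.1 h).2
      _ = wtc b := by rw [wtc_uuv, zero_add, wtc_eq_hammingNorm 0, hammingNorm_zero, zero_add]

theorem min_dGRM_slice_le_dGRM (hS : slice S 1 ⊆ slice S 0) (hT : slice T 1 ⊆ slice T 0) :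
    min (2 * dGRM (slice T 0) (slice S 0)) (dGRM (slice T 1) (slice S 1)) ≤ dGRM T S := by
  refine le_dGRM fun c hcT hcS => ?_
  obtain ⟨⟨u, v⟩, rfl⟩ := uuv.surjective c
  obtain ⟨huT, hvT⟩ := uuv_mem_GRM_iff.1 hcT
  rw [wtc_uuv, Nat.cast_add]
  by_cases hvS : v ∈ GRM (slice S 1)
  · have huS : u ∉ GRM (slice S 0) := fun huS => hcS (uuv_mem_GRM_iff.2 ⟨huS, hvS⟩)
    have huvT : u + v ∈ GRM (slice T 0) := add_mem huT (GRM_mono hT hvT)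
    have huvS : u + v ∉ GRM (slice S 0) := fun huvS =>
      huS (by simpa using sub_mem huvS (GRM_mono hS hvS))
    calc _ ≤ 2 * dGRM (slice T 0) (slice S 0) := min_le_left _ _
      _ = dGRM (slice T 0) (slice S 0) + dGRM (slice T 0) (slice S 0) := two_mul _
      _ ≤ wtc u + wtc (u + v) := add_le_add (dGRM_le_wtc huT huS) (dGRM_le_wtc huvT huvS)
  · calc _ ≤ dGRM (slice T 1) (slice S 1) := min_le_right _ _
      _ ≤ wtc v := dGRM_le_wtc hvT hvS
      _ ≤ wtc u + wtc (u + v) := mod_cast wtc_le_wtc_add_wtc_add u v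

end

theorem GRM_nested_distance_uuv_general {m : ℕ} (S T : Set (Fin (m + 1) → Fin 2))
    (hS : IsLowerSet S) (hT : IsLowerSet T)
    (S₀ S₁ T₀ T₁ : Set (Fin m → Fin 2))
    (hS₀ : S₀ = {s | Fin.cons 0 s ∈ S}) (hS₁ : S₁ = {s | Fin.cons 1 s ∈ S})
    (hT₀ : T₀ = {t | Fin.cons 0 t ∈ T}) (hT₁ : T₁ = {t | Fin.cons 1 t ∈ T}) :
    dGRM T S = min (2 * dGRM T₀ S₀) (dGRM T₁ S₁) := by
  subst hS₀ hS₁ hT₀ hT₁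
  exact le_antisymm (le_min (dGRM_le_two_mul_dGRM_slice_zero T S) (dGRM_le_dGRM_slice_one T S))
    (min_dGRM_slice_le_dGRM T S hS.slice_one_subset_slice_zero hT.slice_one_subset_slice_zero)

/-- For decreasing `S ⊆ T ⊆ {0,1}^{m+1}` split along the first coordinate as
`S = ({0}×S₀) ∪ ({1}×S₁)` and `T = ({0}×T₀) ∪ ({1}×T₁)`, one has
`d(T,S) = min(2·d(T₀,S₀), d(T₁,S₁))`. -/
theorem GRM_nested_distance_uuv {m : ℕ} (S T : Set (Fin (m + 1) → Fin 2))
    (hS : IsLowerSet S) (hT : IsLowerSet T) (hST : S ⊆ T)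
    (S₀ S₁ T₀ T₁ : Set (Fin m → Fin 2))
    (hS₀ : S₀ = {s | Fin.cons 0 s ∈ S}) (hS₁ : S₁ = {s | Fin.cons 1 s ∈ S})
    (hT₀ : T₀ = {t | Fin.cons 0 t ∈ T}) (hT₁ : T₁ = {t | Fin.cons 1 t ∈ T})
    (hne : ∃ v, v ∈ GRM T ∧ v ∉ GRM S)
    (hne₀ : ∃ v, v ∈ GRM T₀ ∧ v ∉ GRM S₀)
    (hne₁ : ∃ v, v ∈ GRM T₁ ∧ v ∉ GRM S₁) :
    dGRM T S = min (2 * dGRM T₀ S₀) (dGRM T₁ S₁) :=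
  GRM_nested_distance_uuv_general S T hS hT S₀ S₁ T₀ T₁ hS₀ hS₁ hT₀ hT₁
end
end
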